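/- Let m ≥ 3 and let g be the Minkowski bilinear form on ℝ^m. Let v ∈ ℝ^m be a nonzero null vector, P = v^⊥, and let ω₀ be the alternating bilinear form on P × P defined by ω₀((a₁, b₁), (a₂, b₂)) = g(a₁, b₂) − g(a₂, b₁). Let R be the subspace of P × P spanned by (v, 0) and (0, v). Then ω₀ descends to a well-defined nondegenerate alternating bilinear form on the quotient space (P × P) / R, and this quotient has dimension 2m − 4. -/

import Mathlib

open Module

/-- The Minkowski bilinear form on `ℝ^m = (Fin m → ℝ)`:
`g(x, y) = −x₀·y₀ + Σ_{i=1}^{m−1} xᵢ·yᵢ`. -/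
noncomputable def mink {m : ℕ} (x y : Fin m → ℝ) : ℝ :=
  ∑ i : Fin m, (if (i : ℕ) = 0 then -(x i * y i) else x i * y i)

/-- The `g`-orthogonal subspace `v^⊥ = {u ∈ ℝ^m : g(v, u) = 0}` of a vector `v`. -/
def minkOrtho {m : ℕ} (v : Fin m → ℝ) : Submodule ℝ (Fin m → ℝ) where
  carrier := {u | mink v u = 0}
  zero_mem' := by
    simp [mink]
  add_mem' := by
    intro a b ha hb
    have h : mink v (a + b) = mink v a + mink v b := by
      simp only [mink, Pi.add_apply, mul_add, neg_add, ← Finset.sum_add_distrib]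
      apply Finset.sum_congr rfl
      intro i _
      by_cases h : (i : ℕ) = 0 <;> simp [h]
    simp only [Set.mem_setOf_eq] at *
    rw [h, ha, hb, add_zero]
  smul_mem' := by
    intro c a ha
    have h : mink v (c • a) = c * mink v a := by
      simp only [mink, Pi.smul_apply, smul_eq_mul, Finset.mul_sum]
      apply Finset.sum_congr rfl
      intro i _
      by_cases h : (i : ℕ) = 0 <;> simp [h] <;> ring
    simp only [Set.mem_setOf_eq] at *
    rw [h, ha, mul_zero]

/-!
The form `ω₀((a₁, b₁), (a₂, b₂)) = B(a₁, b₂) − B(a₂, b₁)` on `P × P` is alternating for any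
bilinear form `B` on `P`, and for reflexive `B` its kernel is `rad B × rad B`; so it descends to a
nondegenerate alternating form on `(P × P) ⧸ (rad B × rad B)`. Take for `B` the Minkowski form
restricted to `P = v^⊥`. Since the Minkowski form is nondegenerate, `P^⊥ = ℝ v`, and as `v` is null,
`rad B = P ∩ P^⊥ = ℝ v`. Hence `rad B × rad B` is the span of `(v, 0)` and `(0, v)`, and the
quotient has dimension `2 (m − 1) − 2`.
-/

open LinearMap Submodule

namespace LinearMap

variable {R M N P : Type*} [CommRing R] [AddCommGroup M] [Module R M] [AddCommGroup N]
  [Module R N] [AddCommGroup P] [Module R P]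

theorem ker_liftQ₂_eq_bot {M' : Submodule R M} {N' : Submodule R N} {f : M →ₗ[R] N →ₗ[R] P}
    (hM' : M' ≤ ker f) (hN' : N' ≤ ker f.flip) (h : ker f ≤ M') :
    ker (f.liftQ₂ M' N' hM' hN') = ⊥ := by
  refine ker_eq_bot'.mpr fun x hx => ?_
  obtain ⟨p, rfl⟩ := M'.mkQ_surjective x
  refine (Quotient.mk_eq_zero M').mpr (h (LinearMap.ext fun n => ?_))
  simpa using LinearMap.congr_fun hx (Submodule.Quotient.mk n)

theorem isAlt_liftQ₂ {f : M →ₗ[R] M →ₗ[R] P} (hf : f.IsAlt) {N' : Submodule R M}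
    (hN : N' ≤ ker f) (hN' : N' ≤ ker f.flip) : (f.liftQ₂ N' N' hN hN').IsAlt := by
  intro x
  obtain ⟨p, rfl⟩ := N'.mkQ_surjective x
  exact hf p

end LinearMap

namespace LinearMap.BilinForm

variable {R M : Type*} [CommRing R] [AddCommGroup M] [Module R M]

def altProd (B : LinearMap.BilinForm R M) : LinearMap.BilinForm R (M × M) :=
  B.compl₁₂ (fst R M M) (snd R M M) - B.flip.compl₁₂ (snd R M M) (fst R M M)

@[simp]
theorem altProd_apply (B : LinearMap.BilinForm R M) (p q : M × M) :
    B.altProd p q = B p.1 q.2 - B q.1 p.2 :=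
  rfl

theorem isAlt_altProd (B : LinearMap.BilinForm R M) : B.altProd.IsAlt :=
  fun _ => sub_self _

theorem ker_altProd {B : LinearMap.BilinForm R M} (hB : B.IsRefl) :
    ker B.altProd = (ker B).prod (ker B) := by
  ext ⟨a, b⟩
  simp only [mem_ker, mem_prod, LinearMap.ext_iff, altProd_apply, LinearMap.zero_apply,
    Prod.forall]
  refine ⟨fun h => ⟨fun y => by simpa using h 0 y, fun x => ?_⟩, ?_⟩
  · exact hB.eq_iff.mp (by simpa using h x 0)
  · rintro ⟨ha, hb⟩ x y
    rw [ha, hB.eq_iff.mp (hb x), sub_zero]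

variable {K V : Type*} [Field K] [AddCommGroup V] [Module K V] [FiniteDimensional K V]

theorem ker_restrict_orthogonal_span_singleton {B : LinearMap.BilinForm K V}
    (hB : B.Nondegenerate) (hB₀ : B.IsRefl) {v : V} {W : Submodule K V}
    (hW : W = B.orthogonal (K ∙ v)) (hv : v ∈ W) :
    ker (B.restrict W) = K ∙ (⟨v, hv⟩ : W) := by
  subst hW
  ext ⟨u, hu⟩
  calc (⟨u, hu⟩ : B.orthogonal (K ∙ v)) ∈ ker (B.restrict _)
      ↔ u ∈ B.orthogonal (B.orthogonal (K ∙ v)) := by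
        simp [LinearMap.ext_iff, hB₀.eq_iff]
    _ ↔ u ∈ K ∙ v := by rw [orthogonal_orthogonal hB hB₀]
    _ ↔ _ := by simp [mem_span_singleton, Subtype.ext_iff]

end LinearMap.BilinForm

namespace Submodule

theorem span_pair_inl_inr {R M : Type*} [Semiring R] [AddCommMonoid M] [Module R M] (x : M) :
    span R {(x, 0), (0, x)} = (R ∙ x).prod (R ∙ x) := by
  ext ⟨a, b⟩
  simp [mem_span_pair, mem_span_singleton, Prod.ext_iff]

theorem finrank_quotient_prod {K V V₂ : Type*} [Field K] [AddCommGroup V] [Module K V]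
    [AddCommGroup V₂] [Module K V₂] [FiniteDimensional K V] [FiniteDimensional K V₂]
    (p : Submodule K V) (q : Submodule K V₂) :
    finrank K ((V × V₂) ⧸ p.prod q) = finrank K (V ⧸ p) + finrank K (V₂ ⧸ q) := by
  have e := (p.mkQ.prodMap q.mkQ).quotKerEquivOfSurjective
    (Prod.map_surjective.mpr ⟨p.mkQ_surjective, q.mkQ_surjective⟩)
  rw [ker_prodMap, ker_mkQ, ker_mkQ] at e
  rw [e.finrank_eq, finrank_prod]

end Submodule

noncomputable def minkowskiForm (m : ℕ) : LinearMap.BilinForm ℝ (Fin m → ℝ) :=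
  Matrix.toLinearMap₂' ℝ (Matrix.diagonal fun i => if (i : ℕ) = 0 then -1 else 1)

theorem minkowskiForm_apply {m : ℕ} (x y : Fin m → ℝ) : minkowskiForm m x y = mink x y := by
  simp only [minkowskiForm, Matrix.toLinearMap₂'_apply', dotProduct, Matrix.mulVec_diagonal,
    mink]
  refine Finset.sum_congr rfl fun i _ => ?_
  split_ifs <;> ring

theorem minkowskiForm_isSymm (m : ℕ) : (minkowskiForm m).IsSymm := by
  refine ⟨fun x y => ?_⟩
  simp only [minkowskiForm_apply, mink, mul_comm (x _)]

theorem minkowskiForm_nondegenerate (m : ℕ) : (minkowskiForm m).Nondegenerate := by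
  refine LinearMap.nondegenerate_toLinearMap₂'_iff_det_ne_zero.mpr ?_
  rw [Matrix.det_diagonal]
  exact Finset.prod_ne_zero_iff.mpr fun i _ => by split_ifs <;> norm_num

theorem minkOrtho_eq_orthogonal {m : ℕ} (v : Fin m → ℝ) :
    minkOrtho v = (minkowskiForm m).orthogonal (ℝ ∙ v) := by
  ext u
  rw [LinearMap.BilinForm.orthogonal_span_singleton_eq_toLin_ker, mem_ker]
  show mink v u = 0 ↔ minkowskiForm m v u = 0
  rw [minkowskiForm_apply]

theorem finrank_minkOrtho {m : ℕ} {v : Fin m → ℝ} (hv : v ≠ 0) :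
    finrank ℝ (minkOrtho v) = m - 1 := by
  rw [minkOrtho_eq_orthogonal,
    LinearMap.BilinForm.finrank_orthogonal (minkowskiForm_nondegenerate m),
    finrank_span_singleton hv, finrank_fin_fun]

theorem omega0_descends_to_symplectic_general {m : ℕ}
    (v : Fin m → ℝ)
    (hvnull : mink v v = 0) (hv : v ≠ 0) :
    ∃ Ω : ((minkOrtho v × minkOrtho v) ⧸
            (Submodule.span ℝ
              {(((⟨v, hvnull⟩ : minkOrtho v), (0 : minkOrtho v)) :
                  minkOrtho v × minkOrtho v),
               (((0 : minkOrtho v), (⟨v, hvnull⟩ : minkOrtho v)) :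
                  minkOrtho v × minkOrtho v)})) →ₗ[ℝ]
          ((minkOrtho v × minkOrtho v) ⧸
            (Submodule.span ℝ
              {(((⟨v, hvnull⟩ : minkOrtho v), (0 : minkOrtho v)) :
                  minkOrtho v × minkOrtho v),
               (((0 : minkOrtho v), (⟨v, hvnull⟩ : minkOrtho v)) :
                  minkOrtho v × minkOrtho v)})) →ₗ[ℝ] ℝ,
      (∀ p q : minkOrtho v × minkOrtho v,
        Ω (Submodule.Quotient.mk p) (Submodule.Quotient.mk q)
          = mink (p.1 : Fin m → ℝ) (q.2 : Fin m → ℝ)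
            - mink (q.1 : Fin m → ℝ) (p.2 : Fin m → ℝ)) ∧
      (∀ x, Ω x x = 0) ∧
      (∀ x, (∀ y, Ω x y = 0) → x = 0) ∧
      finrank ℝ ((minkOrtho v × minkOrtho v) ⧸
        (Submodule.span ℝ
          {(((⟨v, hvnull⟩ : minkOrtho v), (0 : minkOrtho v)) :
              minkOrtho v × minkOrtho v),
           (((0 : minkOrtho v), (⟨v, hvnull⟩ : minkOrtho v)) :
              minkOrtho v × minkOrtho v)})) = 2 * m - 4 := by
  set B := (minkowskiForm m).restrict (minkOrtho v)
  have hB : B.IsRefl := ((minkowskiForm_isSymm m).restrict _).isRefl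
  have hker : ker B = ℝ ∙ (⟨v, hvnull⟩ : minkOrtho v) :=
    LinearMap.BilinForm.ker_restrict_orthogonal_span_singleton (minkowskiForm_nondegenerate m)
      (minkowskiForm_isSymm m).isRefl (minkOrtho_eq_orthogonal v) hvnull
  have hR : span ℝ {((⟨v, hvnull⟩ : minkOrtho v), 0), (0, ⟨v, hvnull⟩)} = ker B.altProd := by
    rw [span_pair_inl_inr, LinearMap.BilinForm.ker_altProd hB, hker]
  refine ⟨B.isAlt_altProd.isRefl.liftQ₂ _ _ hR.le, fun p q => by simp [B, minkowskiForm_apply],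
    isAlt_liftQ₂ B.isAlt_altProd _ _,
    fun x hx => ker_eq_bot'.mp (ker_liftQ₂_eq_bot _ _ hR.ge) x (LinearMap.ext hx), ?_⟩
  have hv' : (⟨v, hvnull⟩ : minkOrtho v) ≠ 0 := fun h => hv (congrArg Subtype.val h)
  rw [span_pair_inl_inr, finrank_quotient_prod, finrank_quotient, finrank_span_singleton hv',
    finrank_minkOrtho hv]
  omega

/-- In Minkowski space `ℝ^m` (`m ≥ 3`), let `v` be a nonzero null
vector, `P = v^⊥`, `ω₀` the alternating form on `P × P` given by
`ω₀((a₁,b₁),(a₂,b₂)) = g(a₁,b₂) − g(a₂,b₁)`, and `R ⊆ P × P` the subspace spanned by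
`(v, 0)` and `(0, v)`.  Then `ω₀` descends to a well-defined nondegenerate alternating
bilinear form on the quotient `(P × P) / R`, and this quotient has dimension `2m − 4`. -/
theorem omega0_descends_to_symplectic {m : ℕ} (hm : 3 ≤ m)
    (v : Fin m → ℝ)
    (hvnull : mink v v = 0) (hv : v ≠ 0) :
    ∃ Ω : ((minkOrtho v × minkOrtho v) ⧸
            (Submodule.span ℝ
              {(((⟨v, hvnull⟩ : minkOrtho v), (0 : minkOrtho v)) :
                  minkOrtho v × minkOrtho v),
               (((0 : minkOrtho v), (⟨v, hvnull⟩ : minkOrtho v)) :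
                  minkOrtho v × minkOrtho v)})) →ₗ[ℝ]
          ((minkOrtho v × minkOrtho v) ⧸
            (Submodule.span ℝ
              {(((⟨v, hvnull⟩ : minkOrtho v), (0 : minkOrtho v)) :
                  minkOrtho v × minkOrtho v),
               (((0 : minkOrtho v), (⟨v, hvnull⟩ : minkOrtho v)) :
                  minkOrtho v × minkOrtho v)})) →ₗ[ℝ] ℝ,
      (∀ p q : minkOrtho v × minkOrtho v,
        Ω (Submodule.Quotient.mk p) (Submodule.Quotient.mk q)
          = mink (p.1 : Fin m → ℝ) (q.2 : Fin m → ℝ)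
            - mink (q.1 : Fin m → ℝ) (p.2 : Fin m → ℝ)) ∧
      (∀ x, Ω x x = 0) ∧
      (∀ x, (∀ y, Ω x y = 0) → x = 0) ∧
      finrank ℝ ((minkOrtho v × minkOrtho v) ⧸
        (Submodule.span ℝ
          {(((⟨v, hvnull⟩ : minkOrtho v), (0 : minkOrtho v)) :
              minkOrtho v × minkOrtho v),
           (((0 : minkOrtho v), (⟨v, hvnull⟩ : minkOrtho v)) :
              minkOrtho v × minkOrtho v)})) = 2 * m - 4 :=
  omega0_descends_to_symplectic_general v hvnull hv
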